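/- Let (g₁,g₂) and (h₁,h₂) be two generating pairs of G = R ⋊_λ ℤ with σ(g₁) = σ(h₁) and σ(g₂) = σ(h₂). Then there exists an automorphism φ of the group G with φ(g₁) = h₁ and φ(g₂) = h₂. -/

import Mathlib

/-!
Write `ν k = 1 + u + ⋯ + u ^ (k - 1)`, the first coordinate of `(1, 1) ^ k`. For any unit `c`
and any `a`, the shear `(r, k) ↦ (c * r + a * ν k, k)` is an automorphism, since `ν` is a
1-cocycle. For a generating pair `(g₁, g₂)` the exponents are coprime, hence so are `ν g₁.2` and
`ν g₂.2`, and the determinant `g₁.1 * ν g₂.2 - g₂.1 * ν g₁.2` is a unit: otherwise, after a shear,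
both generators would have first coordinate in a proper ideal. Two generating pairs with the same
exponents then have determinants differing by a unit `c`, and solving for `a` gives a shear
carrying one pair to the other.
-/

/-- The semidirect product `R ⋊_u ℤ`: underlying set `R × ℤ` with multiplication
`(r, k) · (r', k') = (r + u^k · r', k + k')`, where `u` is a unit of the commutative ring
`R`. -/
def SDP (R : Type*) [CommRing R] (u : Rˣ) : Type _ := R × ℤ

namespace SDP

variable {R : Type*} [CommRing R] {u : Rˣ}

instance : Mul (SDP R u) := ⟨fun g h => (g.1 + ((u ^ g.2 : Rˣ) : R) * h.1, g.2 + h.2)⟩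
instance : One (SDP R u) := ⟨((0 : R), (0 : ℤ))⟩
instance : Inv (SDP R u) := ⟨fun g => (-(((u ^ (-g.2) : Rˣ) : R) * g.1), -g.2)⟩

theorem mul_def (g h : SDP R u) :
    g * h = (g.1 + ((u ^ g.2 : Rˣ) : R) * h.1, g.2 + h.2) := rfl
theorem one_def : (1 : SDP R u) = ((0 : R), (0 : ℤ)) := rfl
theorem inv_def (g : SDP R u) : g⁻¹ = (-(((u ^ (-g.2) : Rˣ) : R) * g.1), -g.2) := rfl

instance instGroup : Group (SDP R u) where
  mul_assoc a b c := by
    rw [mul_def, mul_def, mul_def, mul_def]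
    refine Prod.ext ?_ ?_
    · show (a.1 + ↑(u ^ a.2) * b.1) + ↑(u ^ (a.2 + b.2)) * c.1
        = a.1 + ↑(u ^ a.2) * (b.1 + ↑(u ^ b.2) * c.1)
      rw [zpow_add]; push_cast; ring
    · show (a.2 + b.2) + c.2 = a.2 + (b.2 + c.2); omega
  one_mul a := by
    rw [mul_def, one_def]
    refine Prod.ext ?_ ?_
    · show (0 : R) + ↑(u ^ (0 : ℤ)) * a.1 = a.1; simp
    · show (0 : ℤ) + a.2 = a.2; omega
  mul_one a := by
    rw [mul_def, one_def]
    refine Prod.ext ?_ ?_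
    · show a.1 + ↑(u ^ a.2) * (0 : R) = a.1; simp
    · show a.2 + (0 : ℤ) = a.2; omega
  inv_mul_cancel a := by
    rw [mul_def, inv_def, one_def]
    refine Prod.ext ?_ ?_
    · show -(↑(u ^ (-a.2)) * a.1) + ↑(u ^ (-a.2)) * a.1 = (0 : R); simp
    · show -a.2 + a.2 = (0 : ℤ); omega

end SDP

theorem IsCoprime.exists_eq_mul_and_eq_mul {R : Type*} [CommRing R] {n₁ n₂ d₁ d₂ : R}
    (h : IsCoprime n₁ n₂) (hd : d₁ * n₂ = d₂ * n₁) : ∃ a, d₁ = a * n₁ ∧ d₂ = a * n₂ := by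
  obtain ⟨α, β, hαβ⟩ := h
  exact ⟨α * d₁ + β * d₂, by linear_combination (-d₁) * hαβ + β * hd,
    by linear_combination (-d₂) * hαβ - α * hd⟩

namespace SDP

variable {R : Type*} [CommRing R] {u : Rˣ}

@[simp] theorem fst_mul (g h : SDP R u) : (g * h).1 = g.1 + ((u ^ g.2 : Rˣ) : R) * h.1 := rfl
@[simp] theorem snd_mul (g h : SDP R u) : (g * h).2 = g.2 + h.2 := rfl
@[simp] theorem fst_one : (1 : SDP R u).1 = 0 := rfl
@[simp] theorem snd_one : (1 : SDP R u).2 = 0 := rfl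

def sndHom : SDP R u →* Multiplicative ℤ where
  toFun g := .ofAdd g.2
  map_one' := rfl
  map_mul' _ _ := rfl

theorem snd_zpow (g : SDP R u) (k : ℤ) : (g ^ k).2 = k * g.2 := by
  simpa [sndHom] using congrArg Multiplicative.toAdd (map_zpow (sndHom (u := u)) g k)

def shift (u : Rˣ) : SDP R u := ((1 : R), (1 : ℤ))

def nu (u : Rˣ) (k : ℤ) : R := (shift u ^ k).1

@[simp] theorem nu_zero : nu u 0 = 0 := rfl

theorem nu_add (k l : ℤ) : nu u (k + l) = nu u k + ((u ^ k : Rˣ) : R) * nu u l := by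
  rw [nu, zpow_add, fst_mul, snd_zpow]
  simp [shift, nu]

def affineHom (c a : R) : SDP R u →* SDP R u where
  toFun g := (c * g.1 + a * nu u g.2, g.2)
  map_one' := Prod.ext (by simp) rfl
  map_mul' g h := Prod.ext (by
    show c * (g * h).1 + a * nu u (g * h).2
      = (c * g.1 + a * nu u g.2) + ((u ^ g.2 : Rˣ) : R) * (c * h.1 + a * nu u h.2)
    simp only [fst_mul, snd_mul, nu_add]; ring) rfl

@[simp] theorem fst_affineHom (c a : R) (g : SDP R u) :
    (affineHom c a g).1 = c * g.1 + a * nu u g.2 := rfl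
@[simp] theorem snd_affineHom (c a : R) (g : SDP R u) : (affineHom c a g).2 = g.2 := rfl

theorem affineHom_comp (c a c' a' : R) :
    (affineHom c a).comp (affineHom c' a') = (affineHom (c * c') (c * a' + a) : SDP R u →* _) :=
  MonoidHom.ext fun g => Prod.ext
    (by simp only [MonoidHom.comp_apply, fst_affineHom, snd_affineHom]; ring) rfl

theorem affineHom_one_zero : (affineHom 1 0 : SDP R u →* SDP R u) = MonoidHom.id _ :=
  MonoidHom.ext fun g => Prod.ext (by simp) rfl

def affineEquiv (c : Rˣ) (a : R) : SDP R u ≃* SDP R u :=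
  (affineHom (c : R) a).toMulEquiv (affineHom ((c⁻¹ : Rˣ) : R) (-(((c⁻¹ : Rˣ) : R) * a)))
    (by rw [affineHom_comp, ← affineHom_one_zero]; congr 1 <;> simp)
    (by rw [affineHom_comp, ← affineHom_one_zero]; congr 1 <;> simp)

theorem affineEquiv_apply (c : Rˣ) (a : R) (g : SDP R u) :
    affineEquiv c a g = affineHom (c : R) a g := rfl

def idealSubgroup (J : Ideal R) : Subgroup (SDP R u) where
  carrier := {g | g.1 ∈ J}
  one_mem' := J.zero_mem
  mul_mem' ha hb := J.add_mem ha (J.mul_mem_left _ hb)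
  inv_mem' ha := neg_mem (J.mul_mem_left _ ha)

theorem isCoprime_snd_of_closure_eq_top {g₁ g₂ : SDP R u}
    (hg : Subgroup.closure ({g₁, g₂} : Set (SDP R u)) = ⊤) : IsCoprime g₁.2 g₂.2 := by
  have hmem : sndHom (shift u) ∈ (Subgroup.closure ({g₁, g₂} : Set (SDP R u))).map sndHom :=
    Subgroup.mem_map_of_mem _ (hg ▸ Subgroup.mem_top _)
  rw [MonoidHom.map_closure, Set.image_pair, Subgroup.mem_closure_pair] at hmem
  obtain ⟨m, n, hmn⟩ := hmem
  exact ⟨m, n, by simpa [sndHom, shift] using congrArg Multiplicative.toAdd hmn⟩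

theorem isCoprime_nu_of_isCoprime {k₁ k₂ : ℤ} (h : IsCoprime k₁ k₂) :
    IsCoprime (nu u k₁) (nu u k₂) := by
  obtain ⟨x, y, hxy⟩ := h
  let S : Subgroup (SDP R u) := idealSubgroup (Ideal.span {nu u k₁, nu u k₂})
  have hk₁ : shift u ^ k₁ ∈ S := Ideal.subset_span (by simp [nu])
  have hk₂ : shift u ^ k₂ ∈ S := Ideal.subset_span (by simp [nu])
  have hshift : shift u = (shift u ^ k₁) ^ x * (shift u ^ k₂) ^ y := by
    rw [← zpow_mul, ← zpow_mul, ← zpow_add, mul_comm k₁, mul_comm k₂, hxy, zpow_one]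
  have hone : shift u ∈ S := hshift ▸ S.mul_mem (S.zpow_mem hk₁ x) (S.zpow_mem hk₂ y)
  obtain ⟨α, β, hαβ⟩ := Ideal.mem_span_pair.mp hone
  exact ⟨α, β, hαβ⟩

def det (g₁ g₂ : SDP R u) : R := g₁.1 * nu u g₂.2 - g₂.1 * nu u g₁.2

theorem isUnit_det_of_closure_eq_top {g₁ g₂ : SDP R u}
    (hg : Subgroup.closure ({g₁, g₂} : Set (SDP R u)) = ⊤) : IsUnit (det g₁ g₂) := by
  obtain ⟨α, β, hαβ⟩ := isCoprime_nu_of_isCoprime (u := u) (isCoprime_snd_of_closure_eq_top hg)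
  set J := Ideal.span {det g₁ g₂}
  -- chosen so that the shear by `-a` moves both generators into `idealSubgroup J`
  set a := α * g₁.1 + β * g₂.1
  let S : Subgroup (SDP R u) := (idealSubgroup J).comap (affineHom 1 (-a))
  have hg₁ : g₁ ∈ S := by
    show 1 * g₁.1 + -a * nu u g₁.2 ∈ J
    have : 1 * g₁.1 + -a * nu u g₁.2 = β * det g₁ g₂ := by
      simp only [a, det]; linear_combination (-g₁.1) * hαβ
    exact this ▸ J.mul_mem_left _ (Ideal.mem_span_singleton_self _)
  have hg₂ : g₂ ∈ S := by
    show 1 * g₂.1 + -a * nu u g₂.2 ∈ J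
    have : 1 * g₂.1 + -a * nu u g₂.2 = -α * det g₁ g₂ := by
      simp only [a, det]; linear_combination (-g₂.1) * hαβ
    exact this ▸ J.mul_mem_left _ (Ideal.mem_span_singleton_self _)
  have hS : S = ⊤ := top_le_iff.mp <| hg ▸ (Subgroup.closure_le S).mpr (by
    rintro g (rfl | rfl)
    exacts [hg₁, hg₂])
  have hone : (show SDP R u from (1, 0)) ∈ S := hS ▸ Subgroup.mem_top _
  have hJ : 1 * 1 + -a * nu u 0 ∈ J := hone
  rw [nu_zero, mul_zero, add_zero, mul_one] at hJ
  exact Ideal.span_singleton_eq_top.mp ((Ideal.eq_top_iff_one J).mpr hJ)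

end SDP

open SDP

theorem sdp_exists_automorphism_of_sigma_eq_general
    {R : Type*} [CommRing R] (u : Rˣ)
    (g₁ g₂ h₁ h₂ : SDP R u)
    (hg : Subgroup.closure ({g₁, g₂} : Set (SDP R u)) = ⊤)
    (hh : Subgroup.closure ({h₁, h₂} : Set (SDP R u)) = ⊤)
    (hσ₁ : g₁.2 = h₁.2) (hσ₂ : g₂.2 = h₂.2) :
    ∃ φ : SDP R u ≃* SDP R u, φ g₁ = h₁ ∧ φ g₂ = h₂ := by
  have hν := isCoprime_nu_of_isCoprime (u := u) (isCoprime_snd_of_closure_eq_top hg)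
  have hdg := isUnit_det_of_closure_eq_top hg
  have hdh := isUnit_det_of_closure_eq_top hh
  obtain ⟨c, hdet⟩ : ∃ c : Rˣ, det h₁ h₂ = c * det g₁ g₂ :=
    ⟨hdh.unit * hdg.unit⁻¹, by
      rw [Units.val_mul, mul_assoc, hdg.val_inv_mul, mul_one, hdh.unit_spec]⟩
  obtain ⟨a, ha₁, ha₂⟩ := hν.exists_eq_mul_and_eq_mul (d₁ := h₁.1 - c * g₁.1)
    (d₂ := h₂.1 - c * g₂.1) (by simp only [det, ← hσ₁, ← hσ₂] at hdet; linear_combination hdet)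
  refine ⟨affineEquiv c a, Prod.ext ?_ hσ₁, Prod.ext ?_ hσ₂⟩
  · simp only [affineEquiv_apply, fst_affineHom]; linear_combination -ha₁
  · simp only [affineEquiv_apply, fst_affineHom]; linear_combination -ha₂

/-- Let `R` be a commutative ring generated by a unit `λ ≠ 1` and its inverse, and let
`G = R ⋊_λ ℤ` with projection `σ = (·.2) : G → ℤ`.  If `(g₁, g₂)` and `(h₁, h₂)` are two
generating pairs of `G` with `σ g₁ = σ h₁` and `σ g₂ = σ h₂`, then some automorphism of `G`
carries `(g₁, g₂)` to `(h₁, h₂)`. -/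
theorem sdp_exists_automorphism_of_sigma_eq
    {R : Type*} [CommRing R] (u : Rˣ) (hu : (u : R) ≠ 1)
    (hgen : Subring.closure ({(u : R), ((u⁻¹ : Rˣ) : R)} : Set R) = ⊤)
    (g₁ g₂ h₁ h₂ : SDP R u)
    (hg : Subgroup.closure ({g₁, g₂} : Set (SDP R u)) = ⊤)
    (hh : Subgroup.closure ({h₁, h₂} : Set (SDP R u)) = ⊤)
    (hσ₁ : g₁.2 = h₁.2) (hσ₂ : g₂.2 = h₂.2) :
    ∃ φ : SDP R u ≃* SDP R u, φ g₁ = h₁ ∧ φ g₂ = h₂ :=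
  sdp_exists_automorphism_of_sigma_eq_general u g₁ g₂ h₁ h₂ hg hh hσ₁ hσ₂
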